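/- Let G be a group, K a finite subgroup of cardinality n, h = (1/n) ∑_{p∈K} λ_p, and π(q) = h λ_q h for q ∈ G. Then for all q, q' ∈ G one has π(q)·π(q') = (1/n) ∑_{r∈K} π(q r q') in ℂ[G]. -/
import Mathlib


noncomputable def lam {G : Type*} [Group G] (p : G) : MonoidAlgebra ℂ G :=
  MonoidAlgebra.single p 1

/-- the Hecke-algebra product rule `π(q)·π(q') = (1/n) ∑_{r∈K} π(q r q')`. -/
theorem stmt_7 {G : Type*} [Group G] (K : Subgroup G) [Fintype K] (n : ℕ)
    (hn : n = Fintype.card K) (h : MonoidAlgebra ℂ G)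
    (hdef : h = (n : ℂ)⁻¹ • ∑ p : K, lam (p : G))
    (π : G → MonoidAlgebra ℂ G) (hπ : ∀ q, π q = h * lam q * h) :
    ∀ q q' : G, π q * π q' = (n : ℂ)⁻¹ • ∑ r : K, π (q * (r : G) * q') := by
  intro q q'
  have hn0 : (n : ℂ) ≠ 0 := by
    have : 0 < n := by rw [hn]; exact Fintype.card_pos
    exact_mod_cast this.ne'
  have lmul : ∀ a b : G, (lam a : MonoidAlgebra ℂ G) * lam b = lam (a * b) := by
    intro a b
    simp [lam, MonoidAlgebra.single_mul_single]
  -- expanding a middle h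
  have mid : ∀ x y : MonoidAlgebra ℂ G,
      x * h * y = (n : ℂ)⁻¹ • ∑ r : K, x * lam (r : G) * y := by
    intro x y
    rw [hdef, mul_smul_comm, smul_mul_assoc, Finset.mul_sum, Finset.sum_mul]
  have key : h * h = h := by
    rw [hdef, smul_mul_assoc, mul_smul_comm, Finset.sum_mul]
    simp_rw [Finset.mul_sum, lmul]
    have reind : ∀ p : K, ∑ r : K, lam ((p : G) * (r : G)) = ∑ r : K, lam (r : G) := by
      intro p
      exact Fintype.sum_equiv (Equiv.mulLeft p) _ _ (fun r => by simp)
    simp_rw [reind]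
    rw [Finset.sum_const, Finset.card_univ, ← hn, ← Nat.cast_smul_eq_nsmul ℂ,
      smul_smul, smul_smul]
    congr 1
    field_simp
  have e1 : π q * π q' = h * lam q * h * (lam q' * h) := by
    rw [hπ, hπ]
    calc h * lam q * h * (h * lam q' * h)
        = h * lam q * (h * h) * (lam q' * h) := by noncomm_ring
      _ = h * lam q * h * (lam q' * h) := by rw [key]
  rw [e1, mid (h * lam q) (lam q' * h)]
  congr 1
  refine Finset.sum_congr rfl fun r _ => ?_
  rw [hπ]
  simp only [← lmul, mul_assoc]
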